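/- arXiv:2305.10506 — 4 statements merged into one kernel-verified Lean document; each statement's English description precedes it below -/
import Mathlib

section
/- Consider a first-order autonomous system x_{i+1} = Ā x_i + d̄_i with x_i, d̄_i, Ā ∈ ℝ and attack set K = {i : d̄_i ≠ 0}. If Σ_{i∉K} |x_i| > Σ_{i∈K} |x_i| (sums over i = 0,…,T−1), then Ā is the unique global minimizer of the function A ↦ Σ_{t=0}^{T−1} |x_{t+1} − A x_t| over A ∈ ℝ. -/
open Finset

/-- for a first-order autonomous system `x_{i+1} = Ā x_i + d̄_i` with attack set
`K = {i : d̄_i ≠ 0}`, if `Σ_{i∉K} |x_i| > Σ_{i∈K} |x_i|` (sums over `i = 0,…,T−1`), then `Ā` is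
the unique global minimizer of `A ↦ ∑_{t=0}^{T-1} |x_{t+1} - A x_t|`. -/
theorem first_order_unique_recovery_of_mass_condition
    (T : ℕ) (Abar : ℝ) (x d : ℕ → ℝ)
    (hdyn : ∀ i < T, x (i + 1) = Abar * x i + d i)
    (hcond : ∑ i ∈ (Finset.range T).filter (fun i => d i ≠ 0), |x i| <
             ∑ i ∈ (Finset.range T).filter (fun i => d i = 0), |x i|) :
    ∀ A : ℝ, A ≠ Abar →
      ∑ t ∈ Finset.range T, |x (t + 1) - Abar * x t| <
      ∑ t ∈ Finset.range T, |x (t + 1) - A * x t| := by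
  intro A hA
  set c := Abar - A with hc
  have hc0 : c ≠ 0 := sub_ne_zero.mpr (Ne.symm hA)
  have h1 : ∀ t ∈ Finset.range T, |x (t + 1) - Abar * x t| = |d t| := by
    intro t ht
    rw [hdyn t (Finset.mem_range.mp ht)]; ring_nf
  have h2 : ∀ t ∈ Finset.range T, |x (t + 1) - A * x t| = |d t + c * x t| := by
    intro t ht
    rw [hdyn t (Finset.mem_range.mp ht), hc]; congr 1; ring
  rw [Finset.sum_congr rfl h1, Finset.sum_congr rfl h2]
  have hsplit := Finset.sum_filter_add_sum_filter_not (Finset.range T)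
    (fun i => d i = 0) (fun t => |d t + c * x t|)
  have hsplit2 := Finset.sum_filter_add_sum_filter_not (Finset.range T)
    (fun i => d i = 0) (fun t => |d t|)
  have hzero : ∑ t ∈ (Finset.range T).filter (fun i => d i = 0), |d t| = 0 := by
    apply Finset.sum_eq_zero
    intro t ht
    rw [(Finset.mem_filter.mp ht).2]; simp
  have hA1 : ∑ t ∈ (Finset.range T).filter (fun i => d i = 0), |d t + c * x t|
      = |c| * ∑ t ∈ (Finset.range T).filter (fun i => d i = 0), |x t| := by
    rw [Finset.mul_sum]
    apply Finset.sum_congr rfl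
    intro t ht
    rw [(Finset.mem_filter.mp ht).2]
    rw [zero_add, abs_mul]
  have hA2 : ∑ t ∈ (Finset.range T).filter (fun i => ¬ d i = 0), (|d t| - |c| * |x t|)
      ≤ ∑ t ∈ (Finset.range T).filter (fun i => ¬ d i = 0), |d t + c * x t| := by
    apply Finset.sum_le_sum
    intro t _
    have := abs_sub_abs_le_abs_sub (d t) (-(c * x t))
    simp only [sub_neg_eq_add, abs_neg, abs_mul] at this
    linarith
  rw [← hsplit, ← hsplit2, hzero, zero_add, hA1]
  rw [Finset.sum_sub_distrib, ← Finset.mul_sum] at hA2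
  have hcpos : 0 < |c| := abs_pos.mpr hc0
  nlinarith [hA2, hcond, mul_lt_mul_of_pos_left hcond hcpos]
end

section
/- Consider an autonomous system x_{i+1} = Ā x_i + d̄_i of order n with attack set K. (i) If there exist scalars γ_i^l ∈ [−1,1] for all i ∉ K and l = 1,…,n such that Σ_{i∉K} γ_i^l x_i / √n = Σ_{i∈K} (d̄_i / ‖d̄_i‖_2)_l · x_i for every l, then Ā is a global minimizer of min over A ∈ ℝ^{n×n} of Σ_{t=0}^{T−1} ‖x_{t+1} − A x_t‖_2. (ii) If there exist scalars γ_i^l ∈ [−1,1] for all i ∉ K and l = 1,…,n and subgradient entries s_i^l ∈ ∂‖d̄_i‖_1^l such that Σ_{i∉K} γ_i^l x_i = Σ_{i∈K} s_i^l x_i for every l, then Ā is a global minimizer of min over A ∈ ℝ^{n×n} of Σ_{t=0}^{T−1} ‖x_{t+1} − A x_t‖_1. -/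
open Finset

/-- Euclidean (ℓ2) norm of a finite-dimensional real vector. -/
noncomputable def l2norm {ι : Type*} [Fintype ι] (z : ι → ℝ) : ℝ :=
  Real.sqrt (∑ i, z i ^ 2)

/-- ℓ1 norm of a finite-dimensional real vector. -/
def l1norm {ι : Type*} [Fintype ι] (z : ι → ℝ) : ℝ := ∑ i, |z i|



lemma cs_aux {n : ℕ} (a b : Fin n → ℝ) : ∑ l, a l * b l ≤ l2norm a * l2norm b := by
  have h := real_inner_le_norm (F := EuclideanSpace ℝ (Fin n))
    ((WithLp.equiv 2 _).symm a) ((WithLp.equiv 2 _).symm b)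
  simpa [PiLp.inner_apply, EuclideanSpace.norm_eq, RCLike.inner_apply, l2norm,
    Real.norm_eq_abs, sq_abs, mul_comm] using h

lemma l2norm_nonneg {n : ℕ} (a : Fin n → ℝ) : 0 ≤ l2norm a := Real.sqrt_nonneg _

lemma l2_subgrad {n : ℕ} (dd g v : Fin n → ℝ)
    (h1 : ∑ l, g l * dd l = l2norm dd) (h2 : l2norm g ≤ 1) :
    l2norm dd + ∑ l, g l * v l ≤ l2norm (dd + v) := by
  have hc : ∑ l, g l * (dd + v) l ≤ l2norm g * l2norm (dd + v) := cs_aux _ _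
  have : l2norm dd + ∑ l, g l * v l = ∑ l, g l * (dd + v) l := by
    simp [mul_add, Finset.sum_add_distrib, h1]
  rw [this]
  calc ∑ l, g l * (dd + v) l ≤ l2norm g * l2norm (dd + v) := hc
    _ ≤ 1 * l2norm (dd + v) := by
        exact mul_le_mul_of_nonneg_right h2 (l2norm_nonneg _)
    _ = l2norm (dd + v) := one_mul _

lemma l1_subgrad {n : ℕ} (dd g v : Fin n → ℝ)
    (h : ∀ l, g l * dd l = |dd l| ∧ |g l| ≤ 1) :
    l1norm dd + ∑ l, g l * v l ≤ l1norm (dd + v) := by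
  rw [l1norm, l1norm, ← Finset.sum_add_distrib]
  refine Finset.sum_le_sum fun l _ => ?_
  calc |dd l| + g l * v l = g l * (dd l + v l) := by rw [mul_add, (h l).1]
    _ ≤ |g l * (dd l + v l)| := le_abs_self _
    _ = |g l| * |dd l + v l| := abs_mul _ _
    _ ≤ 1 * |dd l + v l| := mul_le_mul_of_nonneg_right (h l).2 (abs_nonneg _)
    _ = |(dd + v) l| := by simp

lemma master {n T : ℕ} (x d g : ℕ → Fin n → ℝ) (M : Matrix (Fin n) (Fin n) ℝ)
    (N : (Fin n → ℝ) → ℝ)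
    (hsub : ∀ t ∈ Finset.range T, ∀ v : Fin n → ℝ,
      N (d t) + ∑ l, g t l * v l ≤ N (d t + v))
    (hzero : ∀ l m : Fin n, ∑ t ∈ Finset.range T, g t l * x t m = 0) :
    ∑ t ∈ Finset.range T, N (d t) ≤ ∑ t ∈ Finset.range T, N (d t + M.mulVec (x t)) := by
  have hz : ∑ t ∈ Finset.range T, ∑ l, g t l * M.mulVec (x t) l = 0 := by
    calc ∑ t ∈ Finset.range T, ∑ l, g t l * M.mulVec (x t) l
        = ∑ l, ∑ m, M l m * ∑ t ∈ Finset.range T, g t l * x t m := by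
          rw [Finset.sum_comm]
          refine Finset.sum_congr rfl fun l _ => ?_
          simp only [Matrix.mulVec, dotProduct, Finset.mul_sum]
          rw [Finset.sum_comm]
          exact Finset.sum_congr rfl fun m _ =>
            Finset.sum_congr rfl fun t _ => by ring
      _ = 0 := by simp [hzero]
  calc ∑ t ∈ Finset.range T, N (d t)
      = ∑ t ∈ Finset.range T, (N (d t) + ∑ l, g t l * M.mulVec (x t) l) := by
        rw [Finset.sum_add_distrib, hz, add_zero]
    _ ≤ ∑ t ∈ Finset.range T, N (d t + M.mulVec (x t)) :=
        Finset.sum_le_sum fun t ht => hsub t ht _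

/-- sufficient coordinatewise KKT conditions for the autonomous estimators.
(i) If there exist scalars `γ_i^l ∈ [−1,1]` (for `i ∉ K`) with
`Σ_{i∉K} (γ_i^l/√n) x_i = Σ_{i∈K} (d̄_i/‖d̄_i‖₂)_l x_i` for every `l`, then `Ā` globally
minimizes the ℓ2-norm objective. (ii) If there exist scalars `γ_i^l ∈ [−1,1]` and ℓ1-subgradient
entries `s_i^l ∈ ∂‖d̄_i‖₁^l` with `Σ_{i∉K} γ_i^l x_i = Σ_{i∈K} s_i^l x_i` for every `l`, then
`Ā` globally minimizes the ℓ1-norm objective. -/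
theorem coordinatewise_kkt_sufficient_autonomous
    (n T : ℕ) (Abar : Matrix (Fin n) (Fin n) ℝ)
    (x d : ℕ → Fin n → ℝ)
    (hdyn : ∀ i < T, x (i + 1) = Abar.mulVec (x i) + d i) :
    -- part (i): ℓ2 estimator
    ((∃ γ : ℕ → Fin n → ℝ,
        (∀ i ∈ Finset.range T, d i = 0 → ∀ l, |γ i l| ≤ 1) ∧
        (∀ l : Fin n,
          ∑ i ∈ (Finset.range T).filter (fun i => d i = 0), (γ i l / Real.sqrt n) • x i =
          ∑ i ∈ (Finset.range T).filter (fun i => d i ≠ 0), (d i l / l2norm (d i)) • x i)) →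
      ∀ A : Matrix (Fin n) (Fin n) ℝ,
        ∑ t ∈ Finset.range T, l2norm (x (t + 1) - Abar.mulVec (x t)) ≤
        ∑ t ∈ Finset.range T, l2norm (x (t + 1) - A.mulVec (x t))) ∧
    -- part (ii): ℓ1 estimator
    ((∃ γ s : ℕ → Fin n → ℝ,
        (∀ i ∈ Finset.range T, d i = 0 → ∀ l, |γ i l| ≤ 1) ∧
        (∀ i ∈ Finset.range T, d i ≠ 0 → ∀ l,
          (d i l ≠ 0 → s i l = Real.sign (d i l)) ∧ (d i l = 0 → |s i l| ≤ 1)) ∧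
        (∀ l : Fin n,
          ∑ i ∈ (Finset.range T).filter (fun i => d i = 0), γ i l • x i =
          ∑ i ∈ (Finset.range T).filter (fun i => d i ≠ 0), s i l • x i)) →
      ∀ A : Matrix (Fin n) (Fin n) ℝ,
        ∑ t ∈ Finset.range T, l1norm (x (t + 1) - Abar.mulVec (x t)) ≤
        ∑ t ∈ Finset.range T, l1norm (x (t + 1) - A.mulVec (x t))) := by
  classical
  have hA : ∀ t ∈ Finset.range T, x (t + 1) - Abar.mulVec (x t) = d t := by
    intro t ht
    rw [hdyn t (Finset.mem_range.mp ht)]; abel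
  have hB : ∀ (A : Matrix (Fin n) (Fin n) ℝ), ∀ t ∈ Finset.range T,
      x (t + 1) - A.mulVec (x t) = d t + (Abar - A).mulVec (x t) := by
    intro A t ht
    rw [hdyn t (Finset.mem_range.mp ht), Matrix.sub_mulVec]; abel
  constructor
  · rintro ⟨γ, hγ, hsum⟩ A
    set g : ℕ → Fin n → ℝ := fun i l =>
      if d i = 0 then -(γ i l / Real.sqrt n) else d i l / l2norm (d i) with hgdef
    have key : ∑ t ∈ Finset.range T, l2norm (d t) ≤
        ∑ t ∈ Finset.range T, l2norm (d t + (Abar - A).mulVec (x t)) := by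
      refine master x d g (Abar - A) l2norm ?_ ?_
      · intro t ht v
        by_cases hdt : d t = 0
        · refine l2_subgrad _ _ _ ?_ ?_
          · simp [hdt, l2norm]
          · rw [l2norm, show (1:ℝ) = Real.sqrt 1 from Real.sqrt_one.symm]
            apply Real.sqrt_le_sqrt
            have hb : ∀ l : Fin n, g t l ^ 2 ≤ 1 / (n:ℝ) := by
              intro l
              have h1 : g t l = -(γ t l / Real.sqrt n) := by simp [hgdef, hdt]
              have h2 : |γ t l| ≤ 1 := hγ t ht hdt l
              rw [h1, neg_sq, div_pow, Real.sq_sqrt (Nat.cast_nonneg n)]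
              rcases Nat.eq_zero_or_pos n with h | h
              · simp [h]
              · have hn : (0:ℝ) < n := by exact_mod_cast h
                have hle : γ t l ^ 2 ≤ 1 := by
                  calc γ t l ^ 2 = |γ t l| ^ 2 := (sq_abs _).symm
                    _ ≤ 1 ^ 2 := pow_le_pow_left₀ (abs_nonneg _) h2 2
                    _ = 1 := one_pow 2
                gcongr
            calc ∑ l, g t l ^ 2 ≤ ∑ _l : Fin n, 1 / (n:ℝ) :=
                  Finset.sum_le_sum fun l _ => hb l
              _ = n * (1 / (n:ℝ)) := by simp [Finset.sum_const, mul_comm]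
              _ ≤ 1 := by
                  rcases Nat.eq_zero_or_pos n with h | h
                  · simp [h]
                  · have : (0:ℝ) < n := by exact_mod_cast h
                    rw [mul_one_div, div_self this.ne']
        · have hS : 0 < ∑ l, d t l ^ 2 := by
            obtain ⟨l0, hl0⟩ : ∃ l, d t l ≠ 0 := by
              by_contra hc; push_neg at hc; exact hdt (funext hc)
            have := Finset.single_le_sum (f := fun l => d t l ^ 2)
              (fun l _ => sq_nonneg _) (Finset.mem_univ l0)
            exact lt_of_lt_of_le (by positivity) this
          have hN : 0 < l2norm (d t) := Real.sqrt_pos.mpr hS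
          have hNsq : l2norm (d t) ^ 2 = ∑ l, d t l ^ 2 := Real.sq_sqrt hS.le
          have hgt : ∀ l, g t l = d t l / l2norm (d t) := fun l => by
            simp [hgdef, hdt]
          refine l2_subgrad _ _ _ ?_ ?_
          · simp only [hgt]
            have : ∑ l, d t l / l2norm (d t) * d t l = (∑ l, d t l ^ 2) / l2norm (d t) := by
              rw [Finset.sum_div]
              exact Finset.sum_congr rfl fun l _ => by ring
            rw [this, ← hNsq, sq, mul_div_assoc, div_self hN.ne', mul_one]
          · rw [l2norm]
            have : ∑ l, g t l ^ 2 = 1 := by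
              simp only [hgt]
              rw [show ∑ l, (d t l / l2norm (d t)) ^ 2
                  = (∑ l, d t l ^ 2) / l2norm (d t) ^ 2 by
                rw [Finset.sum_div]
                exact Finset.sum_congr rfl fun l _ => by rw [div_pow]]
              rw [hNsq]
              exact div_self hS.ne'
            rw [this, Real.sqrt_one]
      · intro l m
        rw [← Finset.sum_filter_add_sum_filter_not (Finset.range T) (fun i => d i = 0)]
        have e1 : ∑ t ∈ (Finset.range T).filter (fun i => d i = 0), g t l * x t m
            = -∑ t ∈ (Finset.range T).filter (fun i => d i = 0),
                (γ t l / Real.sqrt n) * x t m := by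
          rw [← Finset.sum_neg_distrib]
          refine Finset.sum_congr rfl fun t ht => ?_
          have := (Finset.mem_filter.mp ht).2
          simp [hgdef, this]
        have e2 : ∑ t ∈ (Finset.range T).filter (fun i => ¬ d i = 0), g t l * x t m
            = ∑ t ∈ (Finset.range T).filter (fun i => d i ≠ 0),
                (d t l / l2norm (d t)) * x t m := by
          refine Finset.sum_congr rfl fun t ht => ?_
          have := (Finset.mem_filter.mp ht).2
          simp [hgdef, this]
        have e3 := congrFun (hsum l) m
        simp only [Finset.sum_apply, Pi.smul_apply, smul_eq_mul] at e3
        rw [e1, e2, ← e3, neg_add_cancel]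
    calc ∑ t ∈ Finset.range T, l2norm (x (t + 1) - Abar.mulVec (x t))
        = ∑ t ∈ Finset.range T, l2norm (d t) :=
          Finset.sum_congr rfl fun t ht => by rw [hA t ht]
      _ ≤ ∑ t ∈ Finset.range T, l2norm (d t + (Abar - A).mulVec (x t)) := key
      _ = ∑ t ∈ Finset.range T, l2norm (x (t + 1) - A.mulVec (x t)) :=
          Finset.sum_congr rfl fun t ht => by rw [hB A t ht]
  · rintro ⟨γ, s, hγ, hs, hsum⟩ A
    set g : ℕ → Fin n → ℝ := fun i l => if d i = 0 then -(γ i l) else s i l with hgdef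
    have key : ∑ t ∈ Finset.range T, l1norm (d t) ≤
        ∑ t ∈ Finset.range T, l1norm (d t + (Abar - A).mulVec (x t)) := by
      refine master x d g (Abar - A) l1norm ?_ ?_
      · intro t ht v
        refine l1_subgrad _ _ _ fun l => ?_
        by_cases hdt : d t = 0
        · have h0 : d t l = 0 := by rw [hdt]; rfl
          constructor
          · simp [hgdef, hdt, h0]
          · simp only [hgdef, hdt, if_pos, abs_neg]
            exact hγ t ht hdt l
        · have hgl : g t l = s t l := by simp [hgdef, hdt]
          by_cases hdl : d t l = 0
          · constructor
            · simp [hgl, hdl]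
            · rw [hgl]; exact ((hs t ht hdt l).2) hdl
          · have hsl : s t l = Real.sign (d t l) := (hs t ht hdt l).1 hdl
            rcases lt_or_gt_of_ne hdl with h | h
            · constructor
              · rw [hgl, hsl, Real.sign_of_neg h, abs_of_neg h]; ring
              · rw [hgl, hsl, Real.sign_of_neg h]; norm_num
            · constructor
              · rw [hgl, hsl, Real.sign_of_pos h, abs_of_pos h]; ring
              · rw [hgl, hsl, Real.sign_of_pos h]; norm_num
      · intro l m
        rw [← Finset.sum_filter_add_sum_filter_not (Finset.range T) (fun i => d i = 0)]
        have e1 : ∑ t ∈ (Finset.range T).filter (fun i => d i = 0), g t l * x t m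
            = -∑ t ∈ (Finset.range T).filter (fun i => d i = 0), γ t l * x t m := by
          rw [← Finset.sum_neg_distrib]
          refine Finset.sum_congr rfl fun t ht => ?_
          have := (Finset.mem_filter.mp ht).2
          simp [hgdef, this]
        have e2 : ∑ t ∈ (Finset.range T).filter (fun i => ¬ d i = 0), g t l * x t m
            = ∑ t ∈ (Finset.range T).filter (fun i => d i ≠ 0), s t l * x t m := by
          refine Finset.sum_congr rfl fun t ht => ?_
          have := (Finset.mem_filter.mp ht).2
          simp [hgdef, this]
        have e3 := congrFun (hsum l) m
        simp only [Finset.sum_apply, Pi.smul_apply, smul_eq_mul] at e3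
        rw [e1, e2, ← e3, neg_add_cancel]
    calc ∑ t ∈ Finset.range T, l1norm (x (t + 1) - Abar.mulVec (x t))
        = ∑ t ∈ Finset.range T, l1norm (d t) :=
          Finset.sum_congr rfl fun t ht => by rw [hA t ht]
      _ ≤ ∑ t ∈ Finset.range T, l1norm (d t + (Abar - A).mulVec (x t)) := key
      _ = ∑ t ∈ Finset.range T, l1norm (x (t + 1) - A.mulVec (x t)) :=
          Finset.sum_congr rfl fun t ht => by rw [hB A t ht]
end

section
/- Given a matrix F ∈ ℝ^{n×m} and a vector g ∈ ℝ^n, the following two statements are equivalent: (i) there exists a vector w ∈ ℝ^m with ‖w‖_∞ ≤ 1 satisfying F w = g; (ii) for every z ∈ ℝ^n with ‖z‖_2 = 1, it holds that zᵀ g + ‖zᵀ F‖_1 ≥ 0. -/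
open Finset

/-- Farkas-type lemma: for `F ∈ ℝ^{n×m}` and `g ∈ ℝ^n`, there exists `w` with
`‖w‖_∞ ≤ 1` and `F w = g` iff for every `z` with `‖z‖₂ = 1` one has `zᵀg + ‖zᵀF‖₁ ≥ 0`. -/
theorem farkas_linf_ball
    (n m : ℕ) (F : Matrix (Fin n) (Fin m) ℝ) (g : Fin n → ℝ) :
    (∃ w : Fin m → ℝ, (∀ j, |w j| ≤ 1) ∧ F.mulVec w = g) ↔
    (∀ z : Fin n → ℝ, Real.sqrt (∑ i, z i ^ 2) = 1 →
      0 ≤ (∑ i, z i * g i) + ∑ j, |∑ i, z i * F i j|) := by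
  have swap : ∀ (z : Fin n → ℝ) (w : Fin m → ℝ),
      ∑ i, z i * F.mulVec w i = ∑ j, (∑ i, z i * F i j) * w j := by
    intro z w
    simp only [Matrix.mulVec, dotProduct, Finset.mul_sum, Finset.sum_mul]
    rw [Finset.sum_comm]
    apply Finset.sum_congr rfl; intro j _
    apply Finset.sum_congr rfl; intro i _
    ring
  constructor
  · rintro ⟨w, hw, rfl⟩ z _
    rw [swap]
    have h1 : ∀ j ∈ Finset.univ, -|∑ i, z i * F i j| ≤ (∑ i, z i * F i j) * w j := by
      intro j _
      have h2 : |(∑ i, z i * F i j) * w j| ≤ |∑ i, z i * F i j| := by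
        rw [abs_mul]
        calc |∑ i, z i * F i j| * |w j| ≤ |∑ i, z i * F i j| * 1 :=
              mul_le_mul_of_nonneg_left (hw j) (abs_nonneg _)
          _ = _ := mul_one _
      linarith [neg_abs_le ((∑ i, z i * F i j) * w j)]
    have h3 := Finset.sum_le_sum h1
    rw [Finset.sum_neg_distrib] at h3
    linarith
  · intro h
    by_contra hc
    push_neg at hc
    set S : Set (Fin m → ℝ) := {w | ∀ j, |w j| ≤ 1} with hSdef
    set K : Set (Fin n → ℝ) := (fun w => F.mulVec w) '' S with hKdef
    have hgK : g ∉ K := by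
      rintro ⟨w, hw, hFw⟩
      exact hc w hw hFw
    have hS : IsCompact S := by
      have hSeq : S = Set.pi Set.univ (fun _ : Fin m => Set.Icc (-1 : ℝ) 1) := by
        ext w
        simp only [hSdef, Set.mem_setOf_eq, Set.mem_univ_pi, Set.mem_Icc, abs_le]
      rw [hSeq]
      exact isCompact_univ_pi (fun _ => isCompact_Icc)
    have hcont : Continuous (fun w : Fin m → ℝ => F.mulVec w) :=
      LinearMap.continuous_of_finiteDimensional F.mulVecLin
    have hKcomp : IsCompact K := hS.image hcont
    have hconvS : Convex ℝ S := by
      intro a ha b hb s t hs ht hst j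
      calc |(s • a + t • b) j| = |s * a j + t * b j| := by simp
        _ ≤ |s * a j| + |t * b j| := abs_add_le _ _
        _ = s * |a j| + t * |b j| := by
            rw [abs_mul, abs_mul, abs_of_nonneg hs, abs_of_nonneg ht]
        _ ≤ s * 1 + t * 1 := by
            have := ha j; have := hb j
            apply add_le_add <;> [exact mul_le_mul_of_nonneg_left (ha j) hs;
              exact mul_le_mul_of_nonneg_left (hb j) ht]
        _ = 1 := by linarith
    have hconv : Convex ℝ K := by
      have h' := hconvS.linear_image F.mulVecLin
      exact h'
    obtain ⟨f, u, hfg, hfb⟩ := geometric_hahn_banach_point_closed hconv hKcomp.isClosed hgK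
    set z : Fin n → ℝ := fun i => f (Pi.single i 1) with hzdef
    have hfx : ∀ x : Fin n → ℝ, f x = ∑ i, z i * x i := by
      intro x
      have hxe : x = ∑ i, x i • (Pi.single i 1 : Fin n → ℝ) := by
        ext j
        simp [Pi.single_apply, Finset.sum_apply]
      conv_lhs => rw [hxe]
      rw [map_sum]
      simp only [map_smul, smul_eq_mul, hzdef]
      exact Finset.sum_congr rfl fun i _ => mul_comm _ _
    set c : Fin m → ℝ := fun j => ∑ i, z i * F i j with hcdef
    have hfw : ∀ w : Fin m → ℝ, f (F.mulVec w) = ∑ j, c j * w j := by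
      intro w; rw [hfx, swap]
    -- choose the minimizing w
    set w0 : Fin m → ℝ := fun j => if 0 ≤ c j then -1 else 1 with hw0def
    have hw0 : ∀ j, |w0 j| ≤ 1 := by
      intro j; by_cases hj : 0 ≤ c j <;> simp [hw0def, hj]
    have hmin : f (F.mulVec w0) = -∑ j, |c j| := by
      rw [hfw, ← Finset.sum_neg_distrib]
      apply Finset.sum_congr rfl
      intro j _
      by_cases hj : 0 ≤ c j
      · simp [hw0def, hj, abs_of_nonneg hj]
      · push_neg at hj
        simp [hw0def, not_le.2 hj, abs_of_neg hj]
    have hub : u < -∑ j, |c j| := by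
      rw [← hmin]
      exact hfb _ ⟨w0, hw0, rfl⟩
    have hA : f g = ∑ i, z i * g i := hfx g
    have hneg : (∑ i, z i * g i) + ∑ j, |c j| < 0 := by
      rw [← hA]; linarith
    have hzpos : 0 < ∑ i, z i ^ 2 := by
      rcases (Finset.sum_nonneg fun i _ => sq_nonneg (z i)).lt_or_eq with h0 | h0
      · exact h0
      · exfalso
        have hz0 : ∀ i, z i = 0 := by
          intro i
          have := (Finset.sum_eq_zero_iff_of_nonneg
            (fun i _ => sq_nonneg (z i))).1 h0.symm i (Finset.mem_univ i)
          exact pow_eq_zero_iff (by norm_num) |>.1 this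
        have hA0 : (∑ i, z i * g i) = 0 := by
          apply Finset.sum_eq_zero; intro i _; rw [hz0 i]; ring
        have hB0 : (∑ j, |c j|) = 0 := by
          apply Finset.sum_eq_zero; intro j _
          have : c j = 0 := by
            apply Finset.sum_eq_zero; intro i _; rw [hz0 i]; ring
          simp [this]
        rw [hA0, hB0] at hneg; linarith
    set s := Real.sqrt (∑ i, z i ^ 2) with hsdef
    have hspos : 0 < s := Real.sqrt_pos.2 hzpos
    have hs2 : s ^ 2 = ∑ i, z i ^ 2 := Real.sq_sqrt hzpos.le
    have hnorm : Real.sqrt (∑ i, (z i / s) ^ 2) = 1 := by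
      have : (∑ i, (z i / s) ^ 2) = 1 := by
        simp only [div_pow, ← Finset.sum_div]
        rw [← hs2]
        field_simp
      rw [this, Real.sqrt_one]
    have hfinal := h (fun i => z i / s) hnorm
    have e1 : (∑ i, (z i / s) * g i) = (∑ i, z i * g i) / s := by
      rw [Finset.sum_div]
      apply Finset.sum_congr rfl; intro i _; ring
    have e2 : (∑ j, |∑ i, (z i / s) * F i j|) = (∑ j, |c j|) / s := by
      rw [Finset.sum_div]
      apply Finset.sum_congr rfl; intro j _
      have : (∑ i, (z i / s) * F i j) = c j / s := by
        rw [hcdef]; rw [Finset.sum_div]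
        apply Finset.sum_congr rfl; intro i _; ring
      rw [this, abs_div, abs_of_pos hspos]
    rw [e1, e2, ← add_div] at hfinal
    have := (div_nonneg_iff.1 hfinal)
    rcases this with ⟨h1, _⟩ | ⟨_, h2⟩
    · linarith
    · linarith
end

section
/- For integers n ≥ 1 and k ≥ 1, define C_{n,k} := sup{ x ≥ 0 : C(n+k−1, k) x^k ≤ Σ_{i=0}^{k−1} C(n+i−1, i) x^i }, where C(·,·) denotes the binomial coefficient. Then C_{n,k} is monotone in its parameters: C_{n,k} ≤ C_{m,k} whenever n > m ≥ 1, and C_{n,k} ≤ C_{n,l} whenever 1 ≤ k < l. -/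
open Finset

/-- `C_{n,k} := sup { x ≥ 0 : C(n+k−1, k) x^k ≤ Σ_{i=0}^{k−1} C(n+i−1, i) x^i }`. -/
noncomputable def Cnk (n k : ℕ) : ℝ :=
  sSup {x : ℝ | 0 ≤ x ∧
    (Nat.choose (n + k - 1) k : ℝ) * x ^ k ≤
      ∑ i ∈ Finset.range k, (Nat.choose (n + i - 1) i : ℝ) * x ^ i}

namespace CnkAux

/-- the defining set -/
def S (n k : ℕ) : Set ℝ :=
  {x : ℝ | 0 ≤ x ∧
    (Nat.choose (n + k - 1) k : ℝ) * x ^ k ≤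
      ∑ i ∈ Finset.range k, (Nat.choose (n + i - 1) i : ℝ) * x ^ i}

lemma choose_identity (m i : ℕ) :
    (i + 1) * Nat.choose (m + i + 1) (i + 1) = (m + i + 1) * Nat.choose (m + i) i := by
  rw [Nat.mul_comm (i + 1)]
  exact (Nat.add_one_mul_choose_eq (m + i) i).symm

/-- ratio `choose(a+i,i)/choose(b+i,i)` is increasing in `i` for `b ≤ a`. -/
lemma ratio_mono (a b : ℕ) (hba : b ≤ a) :
    ∀ i k, i ≤ k →
      Nat.choose (a + i) i * Nat.choose (b + k) k ≤
        Nat.choose (b + i) i * Nat.choose (a + k) k := by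
  intro i k hik
  induction k, hik using Nat.le_induction with
  | base => rw [Nat.mul_comm]
  | succ k hik ih =>
      have hpos : 0 < k + 1 := Nat.succ_pos k
      apply Nat.le_of_mul_le_mul_left _ hpos
      have h1 : (k+1) * (Nat.choose (a + i) i * Nat.choose (b + (k+1)) (k+1))
          = Nat.choose (a + i) i * ((b + k + 1) * Nat.choose (b + k) k) := by
        rw [show b + (k+1) = b + k + 1 from rfl, ← choose_identity b k]; ring
      have h2 : (k+1) * (Nat.choose (b + i) i * Nat.choose (a + (k+1)) (k+1))
          = Nat.choose (b + i) i * ((a + k + 1) * Nat.choose (a + k) k) := by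
        rw [show a + (k+1) = a + k + 1 from rfl, ← choose_identity a k]; ring
      rw [h1, h2]
      calc Nat.choose (a + i) i * ((b + k + 1) * Nat.choose (b + k) k)
          = (b + k + 1) * (Nat.choose (a + i) i * Nat.choose (b + k) k) := by ring
        _ ≤ (a + k + 1) * (Nat.choose (b + i) i * Nat.choose (a + k) k) :=
            Nat.mul_le_mul (by omega) ih
        _ = Nat.choose (b + i) i * ((a + k + 1) * Nat.choose (a + k) k) := by ring

/-- key for part 2: `A_{k+1} A_i ≤ A_{i+1} A_k` where `A_j = choose(m+j, j)` (`m = n-1`). -/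
lemma step_key (m i k : ℕ) (hik : i ≤ k) :
    Nat.choose (m + k + 1) (k + 1) * Nat.choose (m + i) i ≤
      Nat.choose (m + i + 1) (i + 1) * Nat.choose (m + k) k := by
  have hpos : 0 < (i + 1) * (k + 1) := by positivity
  apply Nat.le_of_mul_le_mul_left _ hpos
  have h1 : (i+1)*(k+1) * (Nat.choose (m + k + 1) (k + 1) * Nat.choose (m + i) i)
      = (i+1) * ((m + k + 1) * Nat.choose (m + k) k * Nat.choose (m + i) i) := by
    rw [← choose_identity m k]; ring
  have h2 : (i+1)*(k+1) * (Nat.choose (m + i + 1) (i + 1) * Nat.choose (m + k) k)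
      = (k+1) * ((m + i + 1) * Nat.choose (m + i) i * Nat.choose (m + k) k) := by
    rw [← choose_identity m i]; ring
  rw [h1, h2]
  have hcoef : (i+1) * (m + k + 1) ≤ (k+1) * (m + i + 1) := by nlinarith
  calc (i+1) * ((m + k + 1) * Nat.choose (m + k) k * Nat.choose (m + i) i)
      = ((i+1) * (m + k + 1)) * (Nat.choose (m + k) k * Nat.choose (m + i) i) := by ring
    _ ≤ ((k+1) * (m + i + 1)) * (Nat.choose (m + k) k * Nat.choose (m + i) i) :=
        Nat.mul_le_mul_right _ hcoef
    _ = (k+1) * ((m + i + 1) * Nat.choose (m + i) i * Nat.choose (m + k) k) := by ring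

lemma zero_mem (n k : ℕ) (hk : 1 ≤ k) : (0 : ℝ) ∈ S n k := by
  refine ⟨le_refl 0, ?_⟩
  rw [zero_pow (by omega), mul_zero]
  exact Finset.sum_nonneg fun i _ => by positivity

lemma bddAbove_S (n k : ℕ) (hn : 1 ≤ n) (hk : 1 ≤ k) : BddAbove (S n k) := by
  set B : ℝ := ∑ i ∈ Finset.range k, (Nat.choose (n + i - 1) i : ℝ) with hB
  refine ⟨max 1 B, fun x hx => ?_⟩
  obtain ⟨hx0, hineq⟩ := hx
  rcases le_or_gt x 1 with h1 | h1
  · exact le_trans h1 (le_max_left _ _)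
  · refine le_trans ?_ (le_max_right _ _)
    have hxk1 : (0:ℝ) < x ^ (k-1) := pow_pos (by linarith) _
    have hc1 : (1:ℝ) ≤ (Nat.choose (n + k - 1) k : ℝ) := by
      exact_mod_cast Nat.one_le_iff_ne_zero.mpr (Nat.choose_pos (by omega)).ne'
    have hchain : x ^ k ≤ B * x ^ (k-1) := by
      calc x ^ k ≤ (Nat.choose (n + k - 1) k : ℝ) * x ^ k := by
            nlinarith [pow_nonneg hx0 k]
        _ ≤ ∑ i ∈ Finset.range k, (Nat.choose (n + i - 1) i : ℝ) * x ^ i := hineq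
        _ ≤ ∑ i ∈ Finset.range k, (Nat.choose (n + i - 1) i : ℝ) * x ^ (k-1) := by
            refine Finset.sum_le_sum fun i hi => ?_
            have hik : i < k := Finset.mem_range.mp hi
            have hi' : i ≤ k - 1 := by omega
            have := pow_le_pow_right₀ (by linarith : (1:ℝ) ≤ x) hi'
            exact mul_le_mul_of_nonneg_left this (by positivity)
        _ = B * x ^ (k-1) := by rw [hB, Finset.sum_mul]
    have hxk : x ^ k = x * x ^ (k-1) := by
      rw [← pow_succ']; congr 1; omega
    rw [hxk] at hchain
    exact le_of_mul_le_mul_right (by linarith [hchain]) hxk1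

/-- part-1 inclusion: `S n k ⊆ S m k` for `1 ≤ m ≤ n`. -/
lemma subset_one (n m k : ℕ) (hm : 1 ≤ m) (hmn : m ≤ n) : S n k ⊆ S m k := by
  rintro x ⟨hx0, hineq⟩
  refine ⟨hx0, ?_⟩
  have hn : 1 ≤ n := le_trans hm hmn
  set cn : ℝ := (Nat.choose (n + k - 1) k : ℝ) with hcn
  have hcnpos : (0:ℝ) < cn := by
    rw [hcn]
    exact Nat.cast_pos.mpr (Nat.choose_pos (by omega : k ≤ n + k - 1))
  rw [← mul_le_mul_iff_right₀ hcnpos]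
  calc cn * ((Nat.choose (m + k - 1) k : ℝ) * x ^ k)
      = (Nat.choose (m + k - 1) k : ℝ) * (cn * x ^ k) := by ring
    _ ≤ (Nat.choose (m + k - 1) k : ℝ) *
          ∑ i ∈ Finset.range k, (Nat.choose (n + i - 1) i : ℝ) * x ^ i :=
        mul_le_mul_of_nonneg_left hineq (by positivity)
    _ = ∑ i ∈ Finset.range k,
          ((Nat.choose (n + i - 1) i : ℝ) * (Nat.choose (m + k - 1) k : ℝ)) * x ^ i := by
        rw [Finset.mul_sum]; congr 1; funext i; ring
    _ ≤ ∑ i ∈ Finset.range k,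
          ((Nat.choose (m + i - 1) i : ℝ) * cn) * x ^ i := by
        refine Finset.sum_le_sum fun i hi => ?_
        refine mul_le_mul_of_nonneg_right ?_ (pow_nonneg hx0 i)
        have key := ratio_mono (n-1) (m-1) (by omega) i k (Finset.mem_range.mp hi).le
        have e1 : n - 1 + i = n + i - 1 := by omega
        have e2 : m - 1 + i = m + i - 1 := by omega
        have e3 : n - 1 + k = n + k - 1 := by omega
        have e4 : m - 1 + k = m + k - 1 := by omega
        rw [e1, e2, e3, e4] at key
        rw [hcn]
        exact_mod_cast key
    _ = cn * ∑ i ∈ Finset.range k, (Nat.choose (m + i - 1) i : ℝ) * x ^ i := by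
        rw [Finset.mul_sum]; congr 1; funext i; ring

/-- part-2 single-step inclusion: `S n k ⊆ S n (k+1)` for `n, k ≥ 1`. -/
lemma subset_succ (n k : ℕ) (hn : 1 ≤ n) (hk : 1 ≤ k) : S n k ⊆ S n (k+1) := by
  rintro x ⟨hx0, hineq⟩
  refine ⟨hx0, ?_⟩
  set A : ℕ → ℝ := fun i => (Nat.choose (n + i - 1) i : ℝ) with hA
  have hApos : ∀ i, (0:ℝ) < A i := fun i => by
    simp only [hA]
    exact Nat.cast_pos.mpr (Nat.choose_pos (by omega : i ≤ n + i - 1))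
  show A (k+1) * x ^ (k+1) ≤ ∑ i ∈ Finset.range (k+1), A i * x ^ i
  rw [← mul_le_mul_iff_right₀ (hApos k)]
  calc A k * (A (k+1) * x ^ (k+1))
      = (A (k+1) * x) * (A k * x ^ k) := by rw [pow_succ]; ring
    _ ≤ (A (k+1) * x) * ∑ i ∈ Finset.range k, A i * x ^ i :=
        mul_le_mul_of_nonneg_left hineq (mul_nonneg (hApos (k+1)).le hx0)
    _ = ∑ i ∈ Finset.range k, (A (k+1) * A i) * x ^ (i+1) := by
        rw [Finset.mul_sum]; congr 1; funext i; rw [pow_succ]; ring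
    _ ≤ ∑ i ∈ Finset.range k, (A k * A (i+1)) * x ^ (i+1) := by
        refine Finset.sum_le_sum fun i hi => ?_
        refine mul_le_mul_of_nonneg_right ?_ (pow_nonneg hx0 _)
        have key := step_key (n-1) i k (Finset.mem_range.mp hi).le
        have e1 : n - 1 + k + 1 = n + (k+1) - 1 := by omega
        have e2 : n - 1 + i = n + i - 1 := by omega
        have e3 : n - 1 + i + 1 = n + (i+1) - 1 := by omega
        have e4 : n - 1 + k = n + k - 1 := by omega
        rw [e1, e3, e2, e4] at key
        have : A (k+1) * A i ≤ A (i+1) * A k := by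
          simp only [hA]; exact_mod_cast key
        linarith [this]
    _ = A k * ∑ i ∈ Finset.range k, A (i+1) * x ^ (i+1) := by
        rw [Finset.mul_sum]; congr 1; funext i; ring
    _ ≤ A k * ∑ i ∈ Finset.range (k+1), A i * x ^ i := by
        refine mul_le_mul_of_nonneg_left ?_ (hApos k).le
        rw [Finset.sum_range_succ']
        simp only [pow_zero, mul_one]
        have : (0:ℝ) ≤ A 0 := (hApos 0).le
        linarith

lemma subset_two (n k l : ℕ) (hn : 1 ≤ n) (hk : 1 ≤ k) (hkl : k ≤ l) : S n k ⊆ S n l := by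
  induction l, hkl using Nat.le_induction with
  | base => exact Set.Subset.refl _
  | succ l hkl ih => exact ih.trans (subset_succ n l hn (le_trans hk hkl))

end CnkAux


/-- monotonicity of `C_{n,k}`: `C_{n,k} ≤ C_{m,k}` whenever `n > m ≥ 1`, and
`C_{n,k} ≤ C_{n,l}` whenever `1 ≤ k < l`. -/
theorem Cnk_monotone :
    (∀ n m k : ℕ, 1 ≤ m → m < n → 1 ≤ k → Cnk n k ≤ Cnk m k) ∧
    (∀ n k l : ℕ, 1 ≤ n → 1 ≤ k → k < l → Cnk n k ≤ Cnk n l) := by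
  constructor
  · intro n m k hm hmn hk
    exact csSup_le_csSup (CnkAux.bddAbove_S m k hm hk) ⟨0, CnkAux.zero_mem n k hk⟩
      (CnkAux.subset_one n m k hm hmn.le)
  · intro n k l hn hk hkl
    exact csSup_le_csSup (CnkAux.bddAbove_S n l hn (by omega)) ⟨0, CnkAux.zero_mem n k hk⟩
      (CnkAux.subset_two n k l hn hk hkl.le)
end
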